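/- arXiv:2502.10510 — 4 statements merged into one kernel-verified Lean document; each statement's English description precedes it below -/
import Mathlib

section
/- Let X be a measurable space, P a nonempty finite index set, and for each p ∈ P let μ_p be a probability measure on X × ℝ such that all μ_p have the same marginal ρ on X and ∫ y² dμ_p(x,y) < ∞. For λ ∈ Δ^P set μ_λ = Σ_{p∈P} λ_p μ_p. For each p let f_p : X → ℝ be measurable with ∫ f_p² dρ < ∞ minimizing f ↦ ∫ (f(x) − y)² dμ_p(x,y) over all measurable f : X → ℝ. Let t be a probability measure on X × ℝ whose marginal on X is absolutely continuous with respect to ρ, with ∫ y² dt < ∞ and ∫ f_p² d(t-marginal) < ∞ for all p. Then for any family (g_λ)_{λ∈Δ^P} of measurable functions g_λ : X → ℝ with ∫ g_λ² dρ < ∞, each minimizing f ↦ ∫ (f(x) − y)² dμ_λ(x,y) over all measurable f, one has ∫ (g_λ(x) − y)² dt(x,y) = ∫ (Σ_{p∈P} λ_p f_p(x) − y)² dt(x,y) for every λ ∈ Δ^P; in particular, λ* minimizes λ ↦ ∫ (g_λ(x) − y)² dt over Δ^P if and only if λ* minimizes λ ↦ ∫ (Σ_{p∈P} λ_p f_p(x)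 − y)² dt over Δ^P. -/
/-!
A Bayes predictor `f` for `μ` satisfies Pythagoras: for every `h`, the risk of `h` exceeds that of
`f` by `‖h - f‖²` in `L²` of the `X`-marginal, because minimality along the line `f + s (h - f)`
kills the cross term. Risk is linear in the measure and the sources share the marginal `ρ`, so
under the mixture `μ_λ` the risk of `h` is a constant plus `∫ Σ_p λ_p (h - f_p)² dρ`, which the
weighted mean `Σ_p λ_p f_p` minimizes pointwise. Hence `Σ_p λ_p f_p` is a Bayes predictor for
`μ_λ` (of finite risk, being no worse than `0`), and Pythagoras forces every other Bayes predictor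
`g_λ` to agree with it `ρ`-a.e., hence a.e. for the target marginal `≪ ρ`; so the two target
risks coincide.
-/

open MeasureTheory
open scoped BigOperators ENNReal

/-- The mean-squared-error risk of predictor `f` under a joint distribution `μ` on `X × ℝ`,
valued in `[0, ∞]`. -/
noncomputable def mseRisk {X : Type*} [MeasurableSpace X]
    (μ : Measure (X × ℝ)) (f : X → ℝ) : ℝ≥0∞ :=
  ∫⁻ z, ENNReal.ofReal ((f z.1 - z.2) ^ 2) ∂μ

open Finset

section WeightedMean

variable {P : Type*} [Fintype P]

theorem sum_mul_sq_sub_eq_add (w a : P → ℝ) (hw : ∑ p, w p = 1) (x : ℝ) :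
    ∑ p, w p * (x - a p) ^ 2
      = ∑ p, w p * ((∑ q, w q * a q) - a p) ^ 2 + (x - ∑ q, w q * a q) ^ 2 := by
  set m := ∑ q, w q * a q
  calc ∑ p, w p * (x - a p) ^ 2
      = ∑ p, (w p * (m - a p) ^ 2 + ((x - m) ^ 2 * w p + 2 * (x - m) * (m * w p - w p * a p))) :=
        sum_congr rfl fun p _ => by ring
    _ = ∑ p, w p * (m - a p) ^ 2 + ((x - m) ^ 2 * ∑ p, w p + 2 * (x - m) * (m * ∑ p, w p - m)) := by
        rw [sum_add_distrib, sum_add_distrib, ← mul_sum, ← mul_sum, sum_sub_distrib, ← mul_sum]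
    _ = _ := by rw [hw]; ring

theorem sum_mul_sq_sub_weightedMean_le (w a : P → ℝ) (hw : ∑ p, w p = 1) (x : ℝ) :
    ∑ p, w p * ((∑ q, w q * a q) - a p) ^ 2 ≤ ∑ p, w p * (x - a p) ^ 2 := by
  rw [sum_mul_sq_sub_eq_add w a hw x]
  exact le_add_of_nonneg_right (sq_nonneg _)

end WeightedMean

section SquareIntegrals

variable {α : Type*} [MeasurableSpace α] {ν : Measure α}

theorem lintegral_ofReal_sq_sub_le {u : α → ℝ} (hu : Measurable u) (v : α → ℝ) :
    ∫⁻ a, ENNReal.ofReal ((u a - v a) ^ 2) ∂ν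
      ≤ 2 * ∫⁻ a, ENNReal.ofReal (u a ^ 2) ∂ν + 2 * ∫⁻ a, ENNReal.ofReal (v a ^ 2) ∂ν := by
  have hu2 : Measurable fun a => ENNReal.ofReal (u a ^ 2) := (hu.pow_const 2).ennreal_ofReal
  rw [← lintegral_const_mul 2 hu2, ← lintegral_const_mul' 2 _ ENNReal.ofNat_ne_top,
    ← lintegral_add_left (hu2.const_mul 2)]
  refine lintegral_mono fun a => ?_
  rw [← ENNReal.ofReal_ofNat 2, ← ENNReal.ofReal_mul zero_le_two, ← ENNReal.ofReal_mul zero_le_two,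
    ← ENNReal.ofReal_add (by positivity) (by positivity)]
  exact ENNReal.ofReal_le_ofReal (by nlinarith [sq_nonneg (u a + v a)])

theorem memLp_two_of_lintegral_ofReal_sq_lt_top {u : α → ℝ} (hu : Measurable u)
    (h : ∫⁻ a, ENNReal.ofReal (u a ^ 2) ∂ν < ∞) : MemLp u 2 ν :=
  (memLp_two_iff_integrable_sq hu.aestronglyMeasurable).mpr
    ⟨(hu.pow_const 2).aestronglyMeasurable,
      (hasFiniteIntegral_iff_ofReal (ae_of_all _ fun a => sq_nonneg (u a))).mpr h⟩

theorem MeasureTheory.MemLp.lintegral_ofReal_sq {u : α → ℝ} (hu : MemLp u 2 ν) :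
    ∫⁻ a, ENNReal.ofReal (u a ^ 2) ∂ν = ENNReal.ofReal (∫ a, u a ^ 2 ∂ν) :=
  (ofReal_integral_eq_lintegral_ofReal hu.integrable_sq (ae_of_all _ fun _ => sq_nonneg _)).symm

theorem integral_add_mul_sq {F Φ : α → ℝ} (hF : MemLp F 2 ν) (hΦ : MemLp Φ 2 ν) (s : ℝ) :
    ∫ a, (F a + s * Φ a) ^ 2 ∂ν
      = ∫ a, F a ^ 2 ∂ν + 2 * s * ∫ a, F a * Φ a ∂ν + s ^ 2 * ∫ a, Φ a ^ 2 ∂ν := by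
  have hFΦ : Integrable (fun a => 2 * s * (F a * Φ a)) ν := (hF.integrable_mul hΦ).const_mul _
  have hΦ2 : Integrable (fun a => s ^ 2 * Φ a ^ 2) ν := hΦ.integrable_sq.const_mul _
  have hF2FΦ : Integrable (fun a => F a ^ 2 + 2 * s * (F a * Φ a)) ν := hF.integrable_sq.add hFΦ
  calc ∫ a, (F a + s * Φ a) ^ 2 ∂ν
      = ∫ a, F a ^ 2 + 2 * s * (F a * Φ a) + s ^ 2 * Φ a ^ 2 ∂ν :=
        integral_congr_ae (ae_of_all _ fun a => by ring)
    _ = _ := by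
        rw [integral_add hF2FΦ hΦ2, integral_add hF.integrable_sq hFΦ,
          integral_const_mul, integral_const_mul]

theorem integral_mul_eq_zero_of_forall_le {F Φ : α → ℝ} (hF : MemLp F 2 ν) (hΦ : MemLp Φ 2 ν)
    (hmin : ∀ s : ℝ, ∫ a, F a ^ 2 ∂ν ≤ ∫ a, (F a + s * Φ a) ^ 2 ∂ν) :
    ∫ a, F a * Φ a ∂ν = 0 := by
  have hquad : ∀ s : ℝ, 0 ≤ (∫ a, Φ a ^ 2 ∂ν) * (s * s) + 2 * (∫ a, F a * Φ a ∂ν) * s + 0 := by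
    intro s
    have := hmin s
    rw [integral_add_mul_sq hF hΦ] at this
    linarith
  have := discrim_le_zero hquad
  rw [discrim] at this
  nlinarith [sq_nonneg (∫ a, F a * Φ a ∂ν)]

theorem lintegral_ofReal_add_sq_eq_of_forall_le {F Φ : α → ℝ} (hF : Measurable F)
    (hΦ : Measurable Φ) (hFfin : ∫⁻ a, ENNReal.ofReal (F a ^ 2) ∂ν ≠ ∞)
    (hmin : ∀ s : ℝ, ∫⁻ a, ENNReal.ofReal (F a ^ 2) ∂ν
      ≤ ∫⁻ a, ENNReal.ofReal ((F a + s * Φ a) ^ 2) ∂ν) :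
    ∫⁻ a, ENNReal.ofReal ((F a + Φ a) ^ 2) ∂ν
      = ∫⁻ a, ENNReal.ofReal (F a ^ 2) ∂ν + ∫⁻ a, ENNReal.ofReal (Φ a ^ 2) ∂ν := by
  by_cases hΦfin : ∫⁻ a, ENNReal.ofReal (Φ a ^ 2) ∂ν = ∞
  · -- `Φ = (F + Φ) - F` with `F ∈ L²`, so `F + Φ ∉ L²` either
    have hle := lintegral_ofReal_sq_sub_le (ν := ν) (u := fun a => F a + Φ a) (hF.add hΦ) F
    simp only [add_sub_cancel_left, hΦfin, top_le_iff] at hle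
    rw [hΦfin, add_top]
    simpa [ENNReal.add_eq_top, ENNReal.mul_eq_top, hFfin] using hle
  have hFL := memLp_two_of_lintegral_ofReal_sq_lt_top hF hFfin.lt_top
  have hΦL := memLp_two_of_lintegral_ofReal_sq_lt_top hΦ (lt_top_iff_ne_top.mpr hΦfin)
  have hline : ∀ s : ℝ, MemLp (fun a => F a + s * Φ a) 2 ν := fun s => hFL.add (hΦL.const_mul s)
  have hmin' : ∀ s : ℝ, ∫ a, F a ^ 2 ∂ν ≤ ∫ a, (F a + s * Φ a) ^ 2 ∂ν := fun s => by
    have := hmin s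
    rwa [hFL.lintegral_ofReal_sq, (hline s).lintegral_ofReal_sq,
      ENNReal.ofReal_le_ofReal_iff (integral_nonneg fun a => sq_nonneg _)] at this
  have horth := integral_mul_eq_zero_of_forall_le hFL hΦL hmin'
  have hpyth := integral_add_mul_sq hFL hΦL 1
  simp only [one_mul, horth, mul_zero, add_zero, one_pow] at hpyth
  have hsum := hline 1
  simp only [one_mul] at hsum
  rw [hsum.lintegral_ofReal_sq, hFL.lintegral_ofReal_sq, hΦL.lintegral_ofReal_sq, hpyth,
    ENNReal.ofReal_add (integral_nonneg fun a => sq_nonneg _)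
      (integral_nonneg fun a => sq_nonneg _)]

end SquareIntegrals

section BayesPredictor

variable {X : Type*} [MeasurableSpace X] {μ : Measure (X × ℝ)} {f g h : X → ℝ}

def IsBayesPredictor (μ : Measure (X × ℝ)) (f : X → ℝ) : Prop :=
  Measurable f ∧ ∀ h : X → ℝ, Measurable h → mseRisk μ f ≤ mseRisk μ h

theorem mseRisk_zero (μ : Measure (X × ℝ)) :
    mseRisk μ 0 = ∫⁻ z, ENNReal.ofReal (z.2 ^ 2) ∂μ := by
  simp [mseRisk]

theorem IsBayesPredictor.mseRisk_ne_top (hf : IsBayesPredictor μ f)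
    (hY : ∫⁻ z, ENNReal.ofReal (z.2 ^ 2) ∂μ < ∞) : mseRisk μ f ≠ ∞ :=
  ((hf.2 0 measurable_const).trans_lt (by rwa [mseRisk_zero])).ne

theorem IsBayesPredictor.mseRisk_eq_add (hf : IsBayesPredictor μ f) (hfin : mseRisk μ f ≠ ∞)
    (hh : Measurable h) :
    mseRisk μ h = mseRisk μ f + ∫⁻ x, ENNReal.ofReal ((h x - f x) ^ 2) ∂(μ.map Prod.fst) := by
  have hf1 : Measurable fun z : X × ℝ => f z.1 := hf.1.comp measurable_fst
  have hh1 : Measurable fun z : X × ℝ => h z.1 := hh.comp measurable_fst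
  have hpyth := lintegral_ofReal_add_sq_eq_of_forall_le (ν := μ)
    (F := fun z => f z.1 - z.2) (Φ := fun z => h z.1 - f z.1)
    (hf1.sub measurable_snd) (hh1.sub hf1) hfin fun s =>
      (hf.2 (fun x => f x + s * (h x - f x)) (hf.1.add ((hh.sub hf.1).const_mul s))).trans_eq
        (lintegral_congr fun z => congrArg ENNReal.ofReal (by ring))
  rw [lintegral_map (f := fun x => ENNReal.ofReal ((h x - f x) ^ 2))
    ((hh.sub hf.1).pow_const 2).ennreal_ofReal measurable_fst, mseRisk, mseRisk, ← hpyth]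
  exact lintegral_congr fun z => congrArg ENNReal.ofReal (by ring)

theorem IsBayesPredictor.ae_eq (hf : IsBayesPredictor μ f) (hfin : mseRisk μ f ≠ ∞)
    (hg : IsBayesPredictor μ g) : g =ᵐ[μ.map Prod.fst] f := by
  have hle := hg.2 f hf.1
  rw [hf.mseRisk_eq_add hfin hg.1] at hle
  have hdist : ∫⁻ x, ENNReal.ofReal ((g x - f x) ^ 2) ∂(μ.map Prod.fst) = 0 :=
    le_zero_iff.mp (ENNReal.le_of_add_le_add_left hfin (by rwa [add_zero]))
  filter_upwards [(lintegral_eq_zero_iff ((hg.1.sub hf.1).pow_const 2).ennreal_ofReal).mp hdist]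
    with x hx
  simpa [sq_nonpos_iff, sub_eq_zero] using hx

theorem mseRisk_congr_ae_map_fst {t : Measure (X × ℝ)} (hfg : f =ᵐ[t.map Prod.fst] g) :
    mseRisk t f = mseRisk t g :=
  lintegral_congr_ae <| (ae_of_ae_map measurable_fst.aemeasurable hfg).mono fun z hz => by
    simp only [hz]

end BayesPredictor

section Mixture

variable {X : Type*} [MeasurableSpace X] {P : Type*} [Fintype P]

theorem lintegral_ofReal_sum_mul {α : Type*} [MeasurableSpace α] (ν : Measure α) {c : P → ℝ}
    (hc : ∀ p, 0 ≤ c p) {u : P → α → ℝ} (hu : ∀ p, Measurable (u p)) (hu0 : ∀ p a, 0 ≤ u p a) :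
    ∫⁻ a, ENNReal.ofReal (∑ p, c p * u p a) ∂ν
      = ∑ p, ENNReal.ofReal (c p) * ∫⁻ a, ENNReal.ofReal (u p a) ∂ν := by
  simp_rw [← lintegral_const_mul _ (hu _).ennreal_ofReal, ← ENNReal.ofReal_mul (hc _)]
  rw [← lintegral_finsetSum _ fun p _ => ((hu p).const_mul _).ennreal_ofReal]
  exact lintegral_congr fun a =>
    ENNReal.ofReal_sum_of_nonneg fun p _ => mul_nonneg (hc p) (hu0 p a)

theorem mseRisk_sum_smul (μ : P → Measure (X × ℝ)) (w : P → ℝ≥0∞) (u : X → ℝ) :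
    mseRisk (∑ p, w p • μ p) u = ∑ p, w p * mseRisk (μ p) u := by
  rw [mseRisk, lintegral_finsetSum_measure]
  exact sum_congr rfl fun p _ => lintegral_smul_measure _ _

variable {μ : P → Measure (X × ℝ)} {ρ : Measure X} {f : P → X → ℝ} {lam : P → ℝ}

theorem map_fst_mixture (hMarg : ∀ p, (μ p).map Prod.fst = ρ) (hnn : ∀ p, 0 ≤ lam p)
    (hsum : ∑ p, lam p = 1) : (∑ p, ENNReal.ofReal (lam p) • μ p).map Prod.fst = ρ := by
  simp only [← Measure.mapₗ_apply_of_measurable measurable_fst, map_sum, map_smul]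
  simp only [Measure.mapₗ_apply_of_measurable measurable_fst, hMarg, ← sum_smul,
    ← ENNReal.ofReal_sum_of_nonneg fun p _ => hnn p, hsum, ENNReal.ofReal_one, one_smul]

theorem mseRisk_mixture_eq (hMarg : ∀ p, (μ p).map Prod.fst = ρ)
    (hf : ∀ p, IsBayesPredictor (μ p) (f p)) (hfin : ∀ p, mseRisk (μ p) (f p) ≠ ∞)
    (hnn : ∀ p, 0 ≤ lam p) {h : X → ℝ} (hh : Measurable h) :
    mseRisk (∑ p, ENNReal.ofReal (lam p) • μ p) h
      = ∑ p, ENNReal.ofReal (lam p) * mseRisk (μ p) (f p)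
        + ∫⁻ x, ENNReal.ofReal (∑ p, lam p * (h x - f p x) ^ 2) ∂ρ := by
  rw [mseRisk_sum_smul, lintegral_ofReal_sum_mul ρ hnn (u := fun p x => (h x - f p x) ^ 2)
    (fun p => (hh.sub (hf p).1).pow_const 2) (fun p x => sq_nonneg _), ← sum_add_distrib]
  refine sum_congr rfl fun p _ => ?_
  rw [(hf p).mseRisk_eq_add (hfin p) hh, hMarg p, mul_add]

theorem isBayesPredictor_weightedMean (hMarg : ∀ p, (μ p).map Prod.fst = ρ)
    (hf : ∀ p, IsBayesPredictor (μ p) (f p)) (hfin : ∀ p, mseRisk (μ p) (f p) ≠ ∞)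
    (hnn : ∀ p, 0 ≤ lam p) (hsum : ∑ p, lam p = 1) :
    IsBayesPredictor (∑ p, ENNReal.ofReal (lam p) • μ p) fun x => ∑ p, lam p * f p x := by
  have hmeas : Measurable fun x => ∑ p, lam p * f p x :=
    Finset.measurable_sum _ fun p _ => (hf p).1.const_mul _
  refine ⟨hmeas, fun h hh => ?_⟩
  rw [mseRisk_mixture_eq hMarg hf hfin hnn hmeas, mseRisk_mixture_eq hMarg hf hfin hnn hh]
  refine add_le_add le_rfl (lintegral_mono fun x => ENNReal.ofReal_le_ofReal ?_)
  exact sum_mul_sq_sub_weightedMean_le lam (fun p => f p x) hsum (h x)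

theorem mseRisk_eq_weightedMean_of_isBayesPredictor_mixture
    (hMarg : ∀ p, (μ p).map Prod.fst = ρ) (hY : ∀ p, ∫⁻ z, ENNReal.ofReal (z.2 ^ 2) ∂(μ p) < ∞)
    (hf : ∀ p, IsBayesPredictor (μ p) (f p)) {t : Measure (X × ℝ)} (hTac : t.map Prod.fst ≪ ρ)
    (hnn : ∀ p, 0 ≤ lam p) (hsum : ∑ p, lam p = 1) {g : X → ℝ}
    (hg : IsBayesPredictor (∑ p, ENNReal.ofReal (lam p) • μ p) g) :
    mseRisk t g = mseRisk t fun x => ∑ p, lam p * f p x := by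
  have hfin : ∀ p, mseRisk (μ p) (f p) ≠ ∞ := fun p => (hf p).mseRisk_ne_top (hY p)
  have hmean := isBayesPredictor_weightedMean hMarg hf hfin hnn hsum
  have hYmix : ∫⁻ z, ENNReal.ofReal (z.2 ^ 2) ∂(∑ p, ENNReal.ofReal (lam p) • μ p) < ∞ := by
    rw [← mseRisk_zero, mseRisk_sum_smul]
    exact ENNReal.sum_lt_top.mpr fun p _ =>
      ENNReal.mul_lt_top ENNReal.ofReal_lt_top (by rw [mseRisk_zero]; exact hY p)
  have hae := hmean.ae_eq (hmean.mseRisk_ne_top hYmix) hg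
  rw [map_fst_mixture hMarg hnn hsum] at hae
  exact mseRisk_congr_ae_map_fst (hTac.ae_le hae)

end Mixture

theorem data_mixing_eq_mixmin_mse_general
    {X : Type*} [MeasurableSpace X] {P : Type*} [Fintype P]
    (μ : P → Measure (X × ℝ))
    (ρ : Measure X) (hMarg : ∀ p, (μ p).map Prod.fst = ρ)
    (hY : ∀ p, ∫⁻ z, ENNReal.ofReal (z.2 ^ 2) ∂(μ p) < ∞)
    (f : P → X → ℝ) (hfMeas : ∀ p, Measurable (f p))
    (hfOpt : ∀ p, ∀ h : X → ℝ, Measurable h → mseRisk (μ p) (f p) ≤ mseRisk (μ p) h)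
    (t : Measure (X × ℝ))
    (hTac : t.map Prod.fst ≪ ρ)
    (g : (P → ℝ) → X → ℝ)
    (hgMeas : ∀ lam : P → ℝ, (∀ p, 0 ≤ lam p) → (∑ p, lam p) = 1 → Measurable (g lam))
    (hgOpt : ∀ lam : P → ℝ, (∀ p, 0 ≤ lam p) → (∑ p, lam p) = 1 →
      ∀ h : X → ℝ, Measurable h →
        mseRisk (∑ p, ENNReal.ofReal (lam p) • μ p) (g lam)
          ≤ mseRisk (∑ p, ENNReal.ofReal (lam p) • μ p) h) :
    (∀ lam : P → ℝ, (∀ p, 0 ≤ lam p) → (∑ p, lam p) = 1 →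
        mseRisk t (g lam) = mseRisk t (fun x => ∑ p, lam p * f p x)) ∧
    (∀ lamStar : P → ℝ, (∀ p, 0 ≤ lamStar p) → (∑ p, lamStar p) = 1 →
      ((∀ lam : P → ℝ, (∀ p, 0 ≤ lam p) → (∑ p, lam p) = 1 →
          mseRisk t (g lamStar) ≤ mseRisk t (g lam)) ↔
        (∀ lam : P → ℝ, (∀ p, 0 ≤ lam p) → (∑ p, lam p) = 1 →
          mseRisk t (fun x => ∑ p, lamStar p * f p x)
            ≤ mseRisk t (fun x => ∑ p, lam p * f p x)))) := by
  have key : ∀ lam : P → ℝ, (∀ p, 0 ≤ lam p) → (∑ p, lam p) = 1 →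
      mseRisk t (g lam) = mseRisk t (fun x => ∑ p, lam p * f p x) := fun lam hnn hsum =>
    mseRisk_eq_weightedMean_of_isBayesPredictor_mixture hMarg hY
      (fun p => ⟨hfMeas p, hfOpt p⟩) hTac hnn hsum ⟨hgMeas lam hnn hsum, hgOpt lam hnn hsum⟩
  refine ⟨key, fun lamStar hnn hsum => ?_⟩
  rw [key lamStar hnn hsum]
  exact forall₃_congr fun lam hnn' hsum' => by rw [key lam hnn' hsum']

/-- Sources `μ p` on `X × ℝ` are probability measures with common `X`-marginal
`ρ` and square-integrable `y`; `f p` is a square-integrable Bayes optimal (MSE-minimizing)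
predictor for `μ p`. The target `t` is a probability measure whose `X`-marginal is absolutely
continuous w.r.t. `ρ`, with `y` and each `f p` square-integrable. Then for any family
`g λ` of square-integrable MSE-minimizers for the mixtures `μ_λ = Σ_p λ_p μ_p`, the target risk
of `g λ` equals that of `x ↦ Σ_p λ_p f_p(x)` for every `λ` in the simplex; in particular `λ*`
minimizes the bi-level objective `λ ↦ ∫(g_λ(x) − y)² dt` over the simplex iff it minimizes the
convex MixMin objective `λ ↦ ∫(Σ_p λ_p f_p(x) − y)² dt` over the simplex. -/
theorem data_mixing_eq_mixmin_mse
    {X : Type*} [MeasurableSpace X] {P : Type*} [Fintype P] [Nonempty P]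
    (μ : P → Measure (X × ℝ)) (hProb : ∀ p, IsProbabilityMeasure (μ p))
    (ρ : Measure X) (hMarg : ∀ p, (μ p).map Prod.fst = ρ)
    (hY : ∀ p, ∫⁻ z, ENNReal.ofReal (z.2 ^ 2) ∂(μ p) < ∞)
    (f : P → X → ℝ) (hfMeas : ∀ p, Measurable (f p))
    (hfL2 : ∀ p, ∫⁻ x, ENNReal.ofReal (f p x ^ 2) ∂ρ < ∞)
    (hfOpt : ∀ p, ∀ h : X → ℝ, Measurable h → mseRisk (μ p) (f p) ≤ mseRisk (μ p) h)
    (t : Measure (X × ℝ)) (hTProb : IsProbabilityMeasure t)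
    (hTac : t.map Prod.fst ≪ ρ)
    (hTY : ∫⁻ z, ENNReal.ofReal (z.2 ^ 2) ∂t < ∞)
    (hTf : ∀ p, ∫⁻ x, ENNReal.ofReal (f p x ^ 2) ∂(t.map Prod.fst) < ∞)
    (g : (P → ℝ) → X → ℝ)
    (hgMeas : ∀ lam : P → ℝ, (∀ p, 0 ≤ lam p) → (∑ p, lam p) = 1 → Measurable (g lam))
    (hgL2 : ∀ lam : P → ℝ, (∀ p, 0 ≤ lam p) → (∑ p, lam p) = 1 →
      ∫⁻ x, ENNReal.ofReal (g lam x ^ 2) ∂ρ < ∞)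
    (hgOpt : ∀ lam : P → ℝ, (∀ p, 0 ≤ lam p) → (∑ p, lam p) = 1 →
      ∀ h : X → ℝ, Measurable h →
        mseRisk (∑ p, ENNReal.ofReal (lam p) • μ p) (g lam)
          ≤ mseRisk (∑ p, ENNReal.ofReal (lam p) • μ p) h) :
    (∀ lam : P → ℝ, (∀ p, 0 ≤ lam p) → (∑ p, lam p) = 1 →
        mseRisk t (g lam) = mseRisk t (fun x => ∑ p, lam p * f p x)) ∧
    (∀ lamStar : P → ℝ, (∀ p, 0 ≤ lamStar p) → (∑ p, lamStar p) = 1 →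
      ((∀ lam : P → ℝ, (∀ p, 0 ≤ lam p) → (∑ p, lam p) = 1 →
          mseRisk t (g lamStar) ≤ mseRisk t (g lam)) ↔
        (∀ lam : P → ℝ, (∀ p, 0 ≤ lam p) → (∑ p, lam p) = 1 →
          mseRisk t (fun x => ∑ p, lamStar p * f p x)
            ≤ mseRisk t (fun x => ∑ p, lam p * f p x)))) :=
  data_mixing_eq_mixmin_mse_general μ ρ hMarg hY f hfMeas hfOpt t hTac g hgMeas hgOpt
end

section
/- Let X be a measurable space, P a nonempty finite index set, and for each p ∈ P let μ_p be a probability measure on X × ℝ such that all μ_p have the same marginal ρ on X and ∫ y² dμ_p(x,y) < ∞. For each p let f_p : X → ℝ be measurable with ∫ f_p² dρ < ∞ minimizing f ↦ ∫ (f(x) − y)² dμ_p(x,y) over all measurable f : X → ℝ. Then for every λ ∈ Δ^P, the function x ↦ Σ_{p∈P} λ_p f_p(x) minimizes f ↦ ∫ (f(x) − y)² d(Σ_{p∈P} λ_p μ_p)(x,y) over all measurable f : X → ℝ. -/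
/-!
Optimality of `f p` makes the residual `f p - y` orthogonal in `L²(μ p)` to every
square-integrable function of `x` (a quadratic in `t` with minimum at `t = 0` has zero linear
coefficient), whence `mseRisk (μ p) g = mseRisk (μ p) (f p) + ∫ (g - f p)² dρ`, both sides being
infinite when `g ∉ L²(ρ)`. Averaging over `p`, the mixture risk of `g` is a constant plus
`∫ Σ_p λ_p (g - f_p)² dρ`, and pointwise `a ↦ Σ_p λ_p (a - b_p)²` is minimized at the weighted
mean `a = Σ_p λ_p b_p`.
-/

open MeasureTheory
open scoped BigOperators ENNReal

theorem Finset.sum_mul_sq_sub_sum_mul_le {ι : Type*} (s : Finset ι) {w : ι → ℝ}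
    (hw : ∑ i ∈ s, w i = 1) (b : ι → ℝ) (a : ℝ) :
    ∑ i ∈ s, w i * (∑ j ∈ s, w j * b j - b i) ^ 2 ≤ ∑ i ∈ s, w i * (a - b i) ^ 2 := by
  set m := ∑ j ∈ s, w j * b j with hm
  have hdiff : ∑ i ∈ s, w i * (a - b i) ^ 2 - ∑ i ∈ s, w i * (m - b i) ^ 2
      = (a - m) * ((a + m) * ∑ i ∈ s, w i - 2 * m) := by
    rw [← Finset.sum_sub_distrib, Finset.mul_sum, hm, Finset.mul_sum, ← Finset.sum_sub_distrib,
      Finset.mul_sum]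
    exact Finset.sum_congr rfl fun i _ => by ring
  rw [hw] at hdiff
  nlinarith [sq_nonneg (a - m)]

namespace MeasureTheory

variable {α : Type*} [MeasurableSpace α] {μ : Measure α}

theorem memLp_two_iff_lintegral_ofReal_sq_lt_top {r : α → ℝ} (hr : AEStronglyMeasurable r μ) :
    MemLp r 2 μ ↔ ∫⁻ a, ENNReal.ofReal (r a ^ 2) ∂μ < ∞ := by
  rw [memLp_two_iff_integrable_sq hr, lt_top_iff_ne_top,
    lintegral_ofReal_ne_top_iff_integrable (f := fun a => r a ^ 2) (hr.pow 2)
      (ae_of_all _ fun _ => sq_nonneg _)]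

theorem MemLp.lintegral_ofReal_sq_s2 {r : α → ℝ} (hr : MemLp r 2 μ) :
    ∫⁻ a, ENNReal.ofReal (r a ^ 2) ∂μ = ENNReal.ofReal (∫ a, r a ^ 2 ∂μ) :=
  (ofReal_integral_eq_lintegral_ofReal hr.integrable_sq (ae_of_all _ fun _ => sq_nonneg _)).symm

theorem integral_add_mul_sq {r v : α → ℝ} (hr : MemLp r 2 μ) (hv : MemLp v 2 μ) (t : ℝ) :
    ∫ a, (r a + t * v a) ^ 2 ∂μ
      = ∫ a, r a ^ 2 ∂μ + 2 * t * ∫ a, r a * v a ∂μ + t ^ 2 * ∫ a, v a ^ 2 ∂μ := by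
  have hrv : Integrable (fun a => 2 * t * (r a * v a)) μ := (hr.integrable_mul hv).const_mul _
  have hv2 : Integrable (fun a => t ^ 2 * v a ^ 2) μ := hv.integrable_sq.const_mul _
  have hexpand : (fun a => (r a + t * v a) ^ 2)
      = fun a => r a ^ 2 + 2 * t * (r a * v a) + t ^ 2 * v a ^ 2 := by
    funext a; ring
  rw [hexpand, integral_add (f := fun a => r a ^ 2 + 2 * t * (r a * v a))
    (hr.integrable_sq.add hrv) hv2, integral_add hr.integrable_sq hrv,
    integral_const_mul, integral_const_mul]

theorem integral_mul_eq_zero_of_forall_integral_sq_le {r v : α → ℝ} (hr : MemLp r 2 μ)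
    (hv : MemLp v 2 μ) (hmin : ∀ t : ℝ, ∫ a, r a ^ 2 ∂μ ≤ ∫ a, (r a + t * v a) ^ 2 ∂μ) :
    ∫ a, r a * v a ∂μ = 0 := by
  have hdiscrim := discrim_le_zero (a := ∫ a, v a ^ 2 ∂μ) (b := 2 * ∫ a, r a * v a ∂μ) (c := 0)
    fun t => by linarith [hmin t, integral_add_mul_sq hr hv t]
  rw [discrim] at hdiscrim
  nlinarith [sq_nonneg (∫ a, r a * v a ∂μ)]

theorem lintegral_ofReal_add_sq_of_forall_le {r v : α → ℝ} (hr : MemLp r 2 μ) (hv : MemLp v 2 μ)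
    (hmin : ∀ t : ℝ, ∫⁻ a, ENNReal.ofReal (r a ^ 2) ∂μ
      ≤ ∫⁻ a, ENNReal.ofReal ((r a + t * v a) ^ 2) ∂μ) :
    ∫⁻ a, ENNReal.ofReal ((r a + v a) ^ 2) ∂μ
      = ∫⁻ a, ENNReal.ofReal (r a ^ 2) ∂μ + ∫⁻ a, ENNReal.ofReal (v a ^ 2) ∂μ := by
  have horth : ∫ a, r a * v a ∂μ = 0 := by
    refine integral_mul_eq_zero_of_forall_integral_sq_le hr hv fun t => ?_
    have := hmin t
    rwa [hr.lintegral_ofReal_sq_s2,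
      MemLp.lintegral_ofReal_sq_s2 (r := fun a => r a + t * v a) (hr.add (hv.const_mul t)),
      ENNReal.ofReal_le_ofReal_iff (integral_nonneg fun _ => sq_nonneg _)] at this
  have hpyth := integral_add_mul_sq hr hv 1
  simp only [one_mul, one_pow, horth, mul_zero, add_zero] at hpyth
  rw [MemLp.lintegral_ofReal_sq_s2 (r := fun a => r a + v a) (hr.add hv), hr.lintegral_ofReal_sq_s2,
    hv.lintegral_ofReal_sq_s2, hpyth,
    ENNReal.ofReal_add (integral_nonneg fun _ => sq_nonneg _)
      (integral_nonneg fun _ => sq_nonneg _)]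

end MeasureTheory

section BayesOptimal

variable {X : Type*} [MeasurableSpace X]

theorem mseRisk_finset_sum_smul {ι : Type*} (s : Finset ι) (c : ι → ℝ≥0∞)
    (μ : ι → Measure (X × ℝ)) (g : X → ℝ) :
    mseRisk (∑ i ∈ s, c i • μ i) g = ∑ i ∈ s, c i * mseRisk (μ i) g := by
  simp only [mseRisk, lintegral_finsetSum_measure, lintegral_smul_measure, smul_eq_mul]

theorem mseRisk_eq_add_of_forall_le {μ : Measure (X × ℝ)} {ρ : Measure X}
    (hMarg : μ.map Prod.fst = ρ) (hY : MemLp Prod.snd 2 μ) {f : X → ℝ} (hfm : Measurable f)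
    (hf : MemLp f 2 ρ) (hopt : ∀ g : X → ℝ, Measurable g → mseRisk μ f ≤ mseRisk μ g)
    {g : X → ℝ} (hg : Measurable g) :
    mseRisk μ g = mseRisk μ f + ∫⁻ x, ENNReal.ofReal ((g x - f x) ^ 2) ∂ρ := by
  have hfst : MeasurePreserving Prod.fst μ ρ := ⟨measurable_fst, hMarg⟩
  by_cases hg2 : MemLp g 2 ρ
  · have hr : MemLp (fun z : X × ℝ => f z.1 - z.2) 2 μ :=
      (hf.comp_measurePreserving hfst).sub hY
    have hv : MemLp (fun z : X × ℝ => g z.1 - f z.1) 2 μ :=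
      (hg2.sub hf).comp_measurePreserving hfst
    have hmin (t : ℝ) : ∫⁻ z, ENNReal.ofReal ((f z.1 - z.2) ^ 2) ∂μ
        ≤ ∫⁻ z, ENNReal.ofReal ((f z.1 - z.2 + t * (g z.1 - f z.1)) ^ 2) ∂μ := by
      have := hopt (fun x => f x + t * (g x - f x)) (by fun_prop)
      unfold mseRisk at this
      convert this using 4
      ring
    rw [← hfst.lintegral_comp (by fun_prop)]
    unfold mseRisk
    convert lintegral_ofReal_add_sq_of_forall_le hr hv hmin using 4
    ring
  · have hrisk : mseRisk μ g = ∞ := by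
      refine not_lt_top_iff.1 fun hlt => hg2 ?_
      have hres : MemLp (fun z : X × ℝ => g z.1 - z.2) 2 μ :=
        (memLp_two_iff_lintegral_ofReal_sq_lt_top (by fun_prop)).2 hlt
      rw [← hMarg, memLp_map_measure_iff hg.aestronglyMeasurable measurable_fst.aemeasurable]
      convert hres.add hY using 1
      ext; simp
    have hdist : ∫⁻ x, ENNReal.ofReal ((g x - f x) ^ 2) ∂ρ = ∞ := by
      refine not_lt_top_iff.1 fun hlt => hg2 ?_
      convert ((memLp_two_iff_lintegral_ofReal_sq_lt_top (by fun_prop)).2 hlt).add hf using 1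
      ext; simp
    rw [hrisk, hdist, add_top]

theorem mseRisk_mixture_eq_s2 {ι : Type*} (s : Finset ι) {μ : ι → Measure (X × ℝ)}
    {ρ : Measure X} (hMarg : ∀ i, (μ i).map Prod.fst = ρ) (hY : ∀ i, MemLp Prod.snd 2 (μ i))
    {f : ι → X → ℝ} (hfm : ∀ i, Measurable (f i)) (hf : ∀ i, MemLp (f i) 2 ρ)
    (hopt : ∀ i, ∀ g : X → ℝ, Measurable g → mseRisk (μ i) (f i) ≤ mseRisk (μ i) g)
    {w : ι → ℝ} (hw : ∀ i, 0 ≤ w i) {g : X → ℝ} (hg : Measurable g) :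
    mseRisk (∑ i ∈ s, ENNReal.ofReal (w i) • μ i) g
      = ∑ i ∈ s, ENNReal.ofReal (w i) * mseRisk (μ i) (f i)
        + ∫⁻ x, ENNReal.ofReal (∑ i ∈ s, w i * (g x - f i x) ^ 2) ∂ρ := by
  have hmeas (i : ι) : Measurable fun x => ENNReal.ofReal ((g x - f i x) ^ 2) :=
    ((hg.sub (hfm i)).pow_const 2).ennreal_ofReal
  simp only [mseRisk_finset_sum_smul, mseRisk_eq_add_of_forall_le (hMarg _) (hY _) (hfm _)
    (hf _) (hopt _) hg, mul_add, Finset.sum_add_distrib,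
    ENNReal.ofReal_sum_of_nonneg fun i _ => mul_nonneg (hw i) (sq_nonneg _),
    ENNReal.ofReal_mul (hw _), lintegral_finsetSum _ fun i _ => (hmeas i).const_mul _,
    lintegral_const_mul _ (hmeas _)]

end BayesOptimal

theorem bayes_optimal_of_mixture_is_mixture_mse_general
    {X : Type*} [MeasurableSpace X] {P : Type*} [Fintype P]
    (μ : P → Measure (X × ℝ))
    (ρ : Measure X) (hMarg : ∀ p, (μ p).map Prod.fst = ρ)
    (hY : ∀ p, ∫⁻ z, ENNReal.ofReal (z.2 ^ 2) ∂(μ p) < ∞)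
    (f : P → X → ℝ) (hfMeas : ∀ p, Measurable (f p))
    (hfL2 : ∀ p, ∫⁻ x, ENNReal.ofReal (f p x ^ 2) ∂ρ < ∞)
    (hfOpt : ∀ p, ∀ g : X → ℝ, Measurable g → mseRisk (μ p) (f p) ≤ mseRisk (μ p) g)
    (lam : P → ℝ) (hNonneg : ∀ p, 0 ≤ lam p) (hSum : (∑ p, lam p) = 1) :
    ∀ g : X → ℝ, Measurable g →
      mseRisk (∑ p, ENNReal.ofReal (lam p) • μ p) (fun x => ∑ p, lam p * f p x)
        ≤ mseRisk (∑ p, ENNReal.ofReal (lam p) • μ p) g := by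
  intro g hg
  have hYL2 (p : P) : MemLp Prod.snd 2 (μ p) :=
    (memLp_two_iff_lintegral_ofReal_sq_lt_top measurable_snd.aestronglyMeasurable).2 (hY p)
  have hfρ (p : P) : MemLp (f p) 2 ρ :=
    (memLp_two_iff_lintegral_ofReal_sq_lt_top (hfMeas p).aestronglyMeasurable).2 (hfL2 p)
  have hmixture {h : X → ℝ} (hh : Measurable h) :=
    mseRisk_mixture_eq_s2 Finset.univ hMarg hYL2 hfMeas hfρ hfOpt hNonneg hh
  rw [hmixture (by fun_prop), hmixture hg]
  gcongr _ + ∫⁻ x, ENNReal.ofReal ?_ ∂ρ with x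
  exact Finset.sum_mul_sq_sub_sum_mul_le _ hSum _ _

/-- If the sources `μ p` on `X × ℝ` are probability measures with the same
`X`-marginal `ρ`, square-integrable `y`, and `f p` is a square-integrable Bayes optimal
(MSE-minimizing) predictor for `μ p`, then for every `λ` in the simplex, `x ↦ Σ_p λ_p f_p(x)`
minimizes the MSE risk for the mixture `Σ_p λ_p μ_p` over all measurable predictors. -/
theorem bayes_optimal_of_mixture_is_mixture_mse
    {X : Type*} [MeasurableSpace X] {P : Type*} [Fintype P] [Nonempty P]
    (μ : P → Measure (X × ℝ)) (hProb : ∀ p, IsProbabilityMeasure (μ p))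
    (ρ : Measure X) (hMarg : ∀ p, (μ p).map Prod.fst = ρ)
    (hY : ∀ p, ∫⁻ z, ENNReal.ofReal (z.2 ^ 2) ∂(μ p) < ∞)
    (f : P → X → ℝ) (hfMeas : ∀ p, Measurable (f p))
    (hfL2 : ∀ p, ∫⁻ x, ENNReal.ofReal (f p x ^ 2) ∂ρ < ∞)
    (hfOpt : ∀ p, ∀ g : X → ℝ, Measurable g → mseRisk (μ p) (f p) ≤ mseRisk (μ p) g)
    (lam : P → ℝ) (hNonneg : ∀ p, 0 ≤ lam p) (hSum : (∑ p, lam p) = 1) :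
    ∀ g : X → ℝ, Measurable g →
      mseRisk (∑ p, ENNReal.ofReal (lam p) • μ p) (fun x => ∑ p, lam p * f p x)
        ≤ mseRisk (∑ p, ENNReal.ofReal (lam p) • μ p) g :=
  bayes_optimal_of_mixture_is_mixture_mse_general μ ρ hMarg hY f hfMeas hfL2 hfOpt lam hNonneg hSum
end

section
/- Let Ω be a measurable space, n ≥ 1, λ ∈ Δ^n, and let q₁, …, q_n and q be probability measures on Ω. Let q̄ = Σ_{i=1}^n λ_i q_i. Then Σ_{i=1}^n λ_i · KL(q_i ‖ q̄) ≤ Σ_{i=1}^n λ_i · KL(q_i ‖ q), where both sides are taken in the extended nonnegative reals [0, ∞]. -/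
/-!
Write `m = ∑ w_j μ_j`. Since `w_i μ_i ≤ m`, the density `dμ_i/dm` is bounded by `1/w_i`, so
`KL(μ_i ‖ m)` is always finite. If some `KL(μ_i ‖ ν)` with `w_i ≠ 0` is infinite there is nothing
to prove. Otherwise the chain rule `log dμ_i/dν = log dμ_i/dm + log dm/dν` (`μ_i`-a.e.) gives the
compensation identity `∑ w_i KL(μ_i ‖ ν) = ∑ w_i KL(μ_i ‖ m) + KL(m ‖ ν)`, and Gibbs' inequality
`KL(m ‖ ν) ≥ 0` concludes.
-/

open MeasureTheory
open scoped BigOperators ENNReal Classical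

/-- The Kullback–Leibler divergence `KL(μ ‖ ν)`, valued in `[0, ∞]`: it equals
`∫ log (dμ/dν) dμ` when `μ ≪ ν` (and this integral exists), and `+∞` otherwise. -/
noncomputable def klDiv {Ω : Type*} [MeasurableSpace Ω] (μ ν : Measure Ω) : ℝ≥0∞ :=
  if μ ≪ ν ∧ Integrable (MeasureTheory.llr μ ν) μ
  then ENNReal.ofReal (∫ x, MeasureTheory.llr μ ν x ∂μ)
  else ∞

section LLR

variable {Ω : Type*} [MeasurableSpace Ω] {μ ν ρ : Measure Ω}

lemma absolutelyContinuous_of_smul_le {c : ℝ≥0∞} (hc : c ≠ 0) (h : c • μ ≤ ν) : μ ≪ ν :=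
  (Measure.absolutelyContinuous_smul hc).trans (Measure.absolutelyContinuous_of_le h)

lemma integrable_llr_of_smul_le [IsFiniteMeasure μ] [IsFiniteMeasure ν] {c : ℝ≥0∞}
    (hc0 : c ≠ 0) (hc : c ≠ ∞) (h : c • μ ≤ ν) : Integrable (llr μ ν) μ := by
  have hbound : ∀ᵐ x ∂ν, (μ.rnDeriv ν x).toReal ∈ Set.Icc 0 c⁻¹.toReal := by
    filter_upwards [Measure.rnDeriv_le_one_of_le h,
      Measure.rnDeriv_smul_left_of_ne_top μ ν hc] with x hle heq
    rw [heq, Pi.smul_apply, smul_eq_mul, Pi.one_apply, mul_comm, ← ENNReal.le_inv_iff_mul_le] at hle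
    exact ⟨ENNReal.toReal_nonneg, ENNReal.toReal_mono (ENNReal.inv_ne_top.2 hc0) hle⟩
  obtain ⟨K, hK⟩ :=
    isCompact_Icc.exists_bound_of_continuousOn Real.continuous_mul_log.continuousOn
  rw [← integrable_rnDeriv_mul_log_iff (absolutelyContinuous_of_smul_le hc0 h)]
  refine Integrable.of_bound ?_ K (hbound.mono fun x hx ↦ hK _ hx)
  exact (Measure.measurable_rnDeriv μ ν).ennreal_toReal.mul
    (Measure.measurable_rnDeriv μ ν).ennreal_toReal.log |>.aestronglyMeasurable

lemma llr_ae_eq_llr_add_llr [SigmaFinite μ] [SigmaFinite ν] [SigmaFinite ρ]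
    (hμν : μ ≪ ν) (hνρ : ν ≪ ρ) : llr μ ρ =ᵐ[μ] llr μ ν + llr ν ρ := by
  have hμρ := hμν.trans hνρ
  filter_upwards [hμρ.ae_le (Measure.rnDeriv_mul_rnDeriv hμν), Measure.rnDeriv_pos hμν,
    hμν.ae_le (Measure.rnDeriv_lt_top μ ν), hμν.ae_le (Measure.rnDeriv_pos hνρ),
    hμρ.ae_le (Measure.rnDeriv_lt_top ν ρ)] with x hmul hμν_pos hμν_lt hνρ_pos hνρ_lt
  simp only [llr, Pi.add_apply]
  rw [← hmul, Pi.mul_apply, ENNReal.toReal_mul,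
    Real.log_mul (ENNReal.toReal_pos hμν_pos.ne' hμν_lt.ne).ne'
      (ENNReal.toReal_pos hνρ_pos.ne' hνρ_lt.ne).ne']

lemma integral_llr_eq_add [SigmaFinite μ] [SigmaFinite ν] [SigmaFinite ρ]
    (hμν : μ ≪ ν) (hνρ : ν ≪ ρ) (hμν_int : Integrable (llr μ ν) μ)
    (hνρ_int : Integrable (llr ν ρ) μ) :
    ∫ x, llr μ ρ x ∂μ = ∫ x, llr μ ν x ∂μ + ∫ x, llr ν ρ x ∂μ := by
  rw [integral_congr_ae (llr_ae_eq_llr_add_llr hμν hνρ), integral_add' hμν_int hνρ_int]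

lemma integrable_llr_of_smul_le_of_integrable [IsFiniteMeasure μ] [IsFiniteMeasure ν]
    [SigmaFinite ρ] {c : ℝ≥0∞} (hc0 : c ≠ 0) (hc : c ≠ ∞) (h : c • μ ≤ ν) (hνρ : ν ≪ ρ)
    (hμρ_int : Integrable (llr μ ρ) μ) : Integrable (llr ν ρ) μ := by
  refine (hμρ_int.sub (integrable_llr_of_smul_le hc0 hc h)).congr ?_
  filter_upwards [llr_ae_eq_llr_add_llr (absolutelyContinuous_of_smul_le hc0 h) hνρ] with x hx
  rw [Pi.sub_apply, hx, Pi.add_apply, add_sub_cancel_left]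

lemma integral_llr_nonneg [IsProbabilityMeasure μ] [IsProbabilityMeasure ν] (hμν : μ ≪ ν)
    (h_int : Integrable (llr μ ν) μ) : 0 ≤ ∫ x, llr μ ν x ∂μ := by
  simpa using InformationTheory.integral_llr_add_sub_measure_univ_nonneg hμν h_int

end LLR

section Mixture

variable {Ω ι : Type*} [MeasurableSpace Ω] [Fintype ι] {μ : ι → Measure Ω} {ν : Measure Ω}
  {w : ι → ℝ≥0∞}

lemma isProbabilityMeasure_sum_smul [∀ i, IsProbabilityMeasure (μ i)] (hw : ∑ i, w i = 1) :
    IsProbabilityMeasure (∑ i, w i • μ i) :=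
  ⟨by simp [Measure.finsetSum_apply, hw]⟩

lemma smul_le_sum_smul (i : ι) : w i • μ i ≤ ∑ j, w j • μ j :=
  Finset.single_le_sum (fun j _ ↦ Measure.zero_le (w j • μ j)) (Finset.mem_univ i)

lemma sum_smul_absolutelyContinuous (h : ∀ i, w i ≠ 0 → μ i ≪ ν) : ∑ i, w i • μ i ≪ ν := by
  refine Measure.AbsolutelyContinuous.mk fun s _ hs ↦ ?_
  rw [Measure.finsetSum_apply]
  refine Finset.sum_eq_zero fun i _ ↦ ?_
  rcases eq_or_ne (w i) 0 with hi | hi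
  · simp [hi]
  · simp [h i hi hs]

lemma integrable_smul_measure_of_ne_zero_imp {f : Ω → ℝ} {ρ : Measure Ω} {c : ℝ≥0∞}
    (hc : c ≠ ∞) (hf : c ≠ 0 → Integrable f ρ) : Integrable f (c • ρ) := by
  rcases eq_or_ne c 0 with h0 | h0
  · simp [h0]
  · exact (hf h0).smul_measure hc

lemma integrable_sum_smul_measure {f : Ω → ℝ} (hw : ∀ i, w i ≠ ∞)
    (hf : ∀ i, w i ≠ 0 → Integrable f (μ i)) : Integrable f (∑ i, w i • μ i) :=
  integrable_finsetSum_measure.2 fun i _ ↦ integrable_smul_measure_of_ne_zero_imp (hw i) (hf i)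

lemma integral_sum_smul_measure {f : Ω → ℝ} (hw : ∀ i, w i ≠ ∞)
    (hf : ∀ i, w i ≠ 0 → Integrable f (μ i)) :
    ∫ x, f x ∂(∑ i, w i • μ i) = ∑ i, (w i).toReal * ∫ x, f x ∂μ i := by
  rw [integral_finsetSum_measure fun i _ ↦ integrable_smul_measure_of_ne_zero_imp (hw i) (hf i)]
  simp only [integral_smul_measure, smul_eq_mul]

end Mixture

section KL

variable {Ω ι : Type*} [MeasurableSpace Ω] [Fintype ι] {μ : ι → Measure Ω} {ν : Measure Ω}
  {w : ι → ℝ≥0∞}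

lemma sum_mul_klDiv_eq_ofReal [∀ i, IsProbabilityMeasure (μ i)] [IsProbabilityMeasure ν]
    (hw : ∀ i, w i ≠ ∞) (h : ∀ i, w i ≠ 0 → μ i ≪ ν ∧ Integrable (llr (μ i) ν) (μ i)) :
    ∑ i, w i * klDiv (μ i) ν = ENNReal.ofReal (∑ i, (w i).toReal * ∫ x, llr (μ i) ν x ∂μ i) := by
  rw [ENNReal.ofReal_sum_of_nonneg fun i _ ↦ ?_]
  · refine Finset.sum_congr rfl fun i _ ↦ ?_
    rcases eq_or_ne (w i) 0 with hi | hi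
    · simp [hi]
    · rw [klDiv, if_pos (h i hi), ENNReal.ofReal_mul ENNReal.toReal_nonneg,
        ENNReal.ofReal_toReal (hw i)]
  · rcases eq_or_ne (w i) 0 with hi | hi
    · simp [hi]
    · exact mul_nonneg ENNReal.toReal_nonneg (integral_llr_nonneg (h i hi).1 (h i hi).2)

lemma sum_mul_integral_llr_mixture_le [∀ i, IsProbabilityMeasure (μ i)] [IsProbabilityMeasure ν]
    (hw : ∑ i, w i = 1) (h : ∀ i, w i ≠ 0 → μ i ≪ ν ∧ Integrable (llr (μ i) ν) (μ i)) :
    ∑ i, (w i).toReal * ∫ x, llr (μ i) (∑ j, w j • μ j) x ∂μ i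
      ≤ ∑ i, (w i).toReal * ∫ x, llr (μ i) ν x ∂μ i := by
  set m := ∑ j, w j • μ j
  have hw_top (i) : w i ≠ ∞ :=
    ENNReal.sum_ne_top.1 (hw ▸ ENNReal.one_ne_top) i (Finset.mem_univ i)
  have := isProbabilityMeasure_sum_smul (μ := μ) hw
  have hmν : m ≪ ν := sum_smul_absolutelyContinuous fun i hi ↦ (h i hi).1
  have hμm_int (i) (hi : w i ≠ 0) : Integrable (llr (μ i) m) (μ i) :=
    integrable_llr_of_smul_le hi (hw_top i) (smul_le_sum_smul i)
  have hmν_int (i) (hi : w i ≠ 0) : Integrable (llr m ν) (μ i) :=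
    integrable_llr_of_smul_le_of_integrable hi (hw_top i) (smul_le_sum_smul i) hmν (h i hi).2
  have gibbs : 0 ≤ ∫ x, llr m ν x ∂m :=
    integral_llr_nonneg hmν (integrable_sum_smul_measure hw_top hmν_int)
  calc ∑ i, (w i).toReal * ∫ x, llr (μ i) m x ∂μ i
      ≤ ∑ i, (w i).toReal * ∫ x, llr (μ i) m x ∂μ i + ∫ x, llr m ν x ∂m :=
        le_add_of_nonneg_right gibbs
    _ = ∑ i, (w i).toReal * (∫ x, llr (μ i) m x ∂μ i + ∫ x, llr m ν x ∂μ i) := by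
      rw [integral_sum_smul_measure hw_top hmν_int, ← Finset.sum_add_distrib]
      simp only [mul_add]
    _ = ∑ i, (w i).toReal * ∫ x, llr (μ i) ν x ∂μ i := by
      refine Finset.sum_congr rfl fun i _ ↦ ?_
      rcases eq_or_ne (w i) 0 with hi | hi
      · simp [hi]
      · rw [integral_llr_eq_add (absolutelyContinuous_of_smul_le hi (smul_le_sum_smul i)) hmν
          (hμm_int i hi) (hmν_int i hi)]

theorem sum_mul_klDiv_mixture_le [∀ i, IsProbabilityMeasure (μ i)] [IsProbabilityMeasure ν]
    (hw : ∑ i, w i = 1) :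
    ∑ i, w i * klDiv (μ i) (∑ j, w j • μ j) ≤ ∑ i, w i * klDiv (μ i) ν := by
  have hw_top (i) : w i ≠ ∞ :=
    ENNReal.sum_ne_top.1 (hw ▸ ENNReal.one_ne_top) i (Finset.mem_univ i)
  by_cases h : ∀ i, w i ≠ 0 → μ i ≪ ν ∧ Integrable (llr (μ i) ν) (μ i)
  · have := isProbabilityMeasure_sum_smul (μ := μ) hw
    have hμm (i) (hi : w i ≠ 0) :
        μ i ≪ ∑ j, w j • μ j ∧ Integrable (llr (μ i) (∑ j, w j • μ j)) (μ i) :=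
      ⟨absolutelyContinuous_of_smul_le hi (smul_le_sum_smul i),
        integrable_llr_of_smul_le hi (hw_top i) (smul_le_sum_smul i)⟩
    rw [sum_mul_klDiv_eq_ofReal hw_top hμm, sum_mul_klDiv_eq_ofReal hw_top h]
    exact ENNReal.ofReal_le_ofReal (sum_mul_integral_llr_mixture_le hw h)
  · push Not at h
    obtain ⟨i, hi, h_infinite⟩ := h
    have hi_top : w i * klDiv (μ i) ν = ∞ := by
      rw [klDiv, if_neg (not_and.2 h_infinite), ENNReal.mul_top hi]
    have h_top : ∑ i, w i * klDiv (μ i) ν = ∞ :=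
      ENNReal.sum_eq_top.2 ⟨i, Finset.mem_univ i, hi_top⟩
    exact h_top ▸ le_top

end KL

theorem mixture_minimizes_weighted_klDiv_general
    {Ω : Type*} [MeasurableSpace Ω] {n : ℕ}
    (lam : Fin n → ℝ) (hNonneg : ∀ i, 0 ≤ lam i) (hSum : (∑ i, lam i) = 1)
    (q : Fin n → Measure Ω) (hq : ∀ i, IsProbabilityMeasure (q i))
    (r : Measure Ω) (hr : IsProbabilityMeasure r) :
    ∑ i, ENNReal.ofReal (lam i) * klDiv (q i) (∑ j, ENNReal.ofReal (lam j) • q j)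
      ≤ ∑ i, ENNReal.ofReal (lam i) * klDiv (q i) r := by
  have hw : ∑ i, ENNReal.ofReal (lam i) = 1 := by
    rw [← ENNReal.ofReal_sum_of_nonneg fun i _ ↦ hNonneg i, hSum, ENNReal.ofReal_one]
  exact sum_mul_klDiv_mixture_le hw

/-- For probability measures `q₁, …, q_n`, `q` on `Ω` and `λ` in the simplex
`Δ^n`, the mixture `q̄ = Σ_i λ_i q_i` minimizes the `λ`-weighted average KL divergence from the
sources: `Σ_i λ_i KL(q_i ‖ q̄) ≤ Σ_i λ_i KL(q_i ‖ q)`, in the extended nonnegative reals. -/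
theorem mixture_minimizes_weighted_klDiv
    {Ω : Type*} [MeasurableSpace Ω] {n : ℕ} (hn : 1 ≤ n)
    (lam : Fin n → ℝ) (hNonneg : ∀ i, 0 ≤ lam i) (hSum : (∑ i, lam i) = 1)
    (q : Fin n → Measure Ω) (hq : ∀ i, IsProbabilityMeasure (q i))
    (r : Measure Ω) (hr : IsProbabilityMeasure r) :
    ∑ i, ENNReal.ofReal (lam i) * klDiv (q i) (∑ j, ENNReal.ofReal (lam j) • q j)
      ≤ ∑ i, ENNReal.ofReal (lam i) * klDiv (q i) r :=
  mixture_minimizes_weighted_klDiv_general lam hNonneg hSum q hq r hr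
end

section
/- Let X be a measurable space with a σ-finite measure ν, P a nonempty finite index set, and for each p ∈ P let μ_p be a probability measure on X with μ_p ≪ ν and density g_p = dμ_p/dν. Fix λ ∈ Δ^P. Then for every measurable f : X → [0, ∞) with ∫ f dν = 1, Σ_{p∈P} λ_p ∫ (−log f(x)) dμ_p(x) ≥ Σ_{p∈P} λ_p ∫ (−log Σ_{q∈P} λ_q g_q(x)) dμ_p(x), where both sides are interpreted in the extended reals. -/
/-!
Put `m = ∑ q, λ q * g q` and `μ̄ = ∑ p, λ p • μ p`, which is the measure with density `m`
w.r.t. `ν`. The `λ`-weighted cross-entropy of any `h` is the cross-entropy of `h` on `μ̄`, so the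
claim is Gibbs' inequality for `μ̄`: by `log t ≤ t - 1`,
`∫ (log m - log f) dμ̄ ≥ ∫ (1 - f / m) dμ̄ ≥ 1 - ∫ f dν ≥ 0`.
Since either cross-entropy may be infinite, this is carried out in `ℝ≥0∞` on the positive and
negative parts of `-log` separately.
-/

open MeasureTheory
open scoped BigOperators ENNReal Classical

/-- The integral `∫ (−log f) dμ`, interpreted in the extended reals: it is the difference of the
lower integral of the positive part of `−log f` (which is `+∞` at points where `f = 0`) and the
lower integral of its negative part. -/
noncomputable def negLogIntegral {X : Type*} [MeasurableSpace X]
    (μ : Measure X) (f : X → ℝ) : EReal :=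
  ((∫⁻ x, (if f x = 0 then ∞ else ENNReal.ofReal (-Real.log (f x))) ∂μ : ℝ≥0∞) : EReal)
    - ((∫⁻ x, ENNReal.ofReal (Real.log (f x)) ∂μ : ℝ≥0∞) : EReal)

namespace EReal

lemma coe_ennreal_sub_le_sub {a b c d : ℝ≥0∞} (hd : b ≠ ∞ → d ≠ ∞) (h : a + d ≤ c + b) :
    (a : EReal) - b ≤ c - d := by
  rcases eq_or_ne b ∞ with rfl | hb
  · simp
  replace hd := hd hb
  rcases eq_or_ne c ∞ with rfl | hc
  · simp [top_sub (coe_ennreal_eq_top_iff.not.2 hd)]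
  have ha : a ≠ ∞ := fun ha => by simp [ha, hb, hc] at h
  lift a to NNReal using ha
  lift b to NNReal using hb
  lift c to NNReal using hc
  lift d to NNReal using hd
  simp only [coe_nnreal_eq_coe_real, ← coe_sub, EReal.coe_le_coe_iff]
  have : (a : ℝ) + d ≤ c + b := by exact_mod_cast h
  linarith

end EReal

lemma ENNReal.ofReal_neg_add_ofReal_add_le {α β c r : ℝ} (hc : 0 ≤ c) (h : α - β + c ≤ r) :
    ENNReal.ofReal (-β) + ENNReal.ofReal α + ENNReal.ofReal c
      ≤ ENNReal.ofReal (-α) + ENNReal.ofReal β + ENNReal.ofReal r := by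
  have hmax : ∀ u, ENNReal.ofReal u = ENNReal.ofReal (max u 0) := by simp
  rw [hmax (-β), hmax α, hmax (-α), hmax β, hmax r,
    ← ENNReal.ofReal_add (le_max_right _ _) (le_max_right _ _),
    ← ENNReal.ofReal_add (by positivity) hc,
    ← ENNReal.ofReal_add (le_max_right _ _) (le_max_right _ _),
    ← ENNReal.ofReal_add (by positivity) (le_max_right _ _)]
  refine ENNReal.ofReal_le_ofReal ?_
  have := max_zero_sub_max_neg_zero_eq_self α
  have := max_zero_sub_max_neg_zero_eq_self β
  have := le_max_left r 0
  linarith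

namespace MeasureTheory

variable {X : Type*} [MeasurableSpace X]

lemma withDensity_finsetSum {ι : Type*} (ν : Measure X) (s : Finset ι) {d : ι → X → ℝ≥0∞}
    (hd : ∀ i ∈ s, Measurable (d i)) :
    ν.withDensity (∑ i ∈ s, d i) = ∑ i ∈ s, ν.withDensity (d i) := by
  induction s using Finset.induction_on with
  | empty => simp
  | insert i s hi ih =>
    rw [Finset.sum_insert hi, Finset.sum_insert hi, withDensity_add_left (hd i (by simp)),
      ih fun j hj => hd j (Finset.mem_insert_of_mem hj)]

lemma finsetSum_smul_withDensity {ι : Type*} (ν : Measure X) (s : Finset ι) (c : ι → ℝ≥0∞)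
    {d : ι → X → ℝ≥0∞} (hd : ∀ i ∈ s, Measurable (d i)) :
    ∑ i ∈ s, c i • ν.withDensity (d i) = ν.withDensity (∑ i ∈ s, c i • d i) := by
  rw [withDensity_finsetSum ν s fun i hi => (hd i hi).const_smul _]
  exact Finset.sum_congr rfl fun i hi => (withDensity_smul _ (hd i hi)).symm

lemma isProbabilityMeasure_finsetSum_smul {ι : Type*} (s : Finset ι) {μ : ι → Measure X}
    (hμ : ∀ i, IsProbabilityMeasure (μ i)) {c : ι → ℝ≥0∞} (hc : ∑ i ∈ s, c i = 1) :
    IsProbabilityMeasure (∑ i ∈ s, c i • μ i) :=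
  ⟨by simp [hc]⟩

lemma lintegral_ofReal_div_le (ν : Measure X) {m : X → ℝ} (hm : Measurable m) (f : X → ℝ) :
    ∫⁻ x, ENNReal.ofReal (f x / m x) ∂ν.withDensity (fun x => ENNReal.ofReal (m x))
      ≤ ∫⁻ x, ENNReal.ofReal (f x) ∂ν := by
  refine (lintegral_withDensity_le_lintegral_mul ν hm.ennreal_ofReal _).trans
    (lintegral_mono fun x => ?_)
  rcases le_or_gt (m x) 0 with hmx | hmx
  · simp [ENNReal.ofReal_of_nonpos hmx]
  · simp [← ENNReal.ofReal_mul hmx.le, mul_div_cancel₀ _ hmx.ne']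

end MeasureTheory

section NegLogIntegral

variable {X : Type*} [MeasurableSpace X]

noncomputable def negLogPosPart (t : ℝ) : ℝ≥0∞ :=
  if t = 0 then ∞ else ENNReal.ofReal (-Real.log t)

noncomputable def negLogNegPart (t : ℝ) : ℝ≥0∞ :=
  ENNReal.ofReal (Real.log t)

lemma negLogIntegral_eq (μ : Measure X) (f : X → ℝ) :
    negLogIntegral μ f
      = ((∫⁻ x, negLogPosPart (f x) ∂μ : ℝ≥0∞) : EReal) - (∫⁻ x, negLogNegPart (f x) ∂μ : ℝ≥0∞) :=
  rfl

@[fun_prop]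
lemma measurable_negLogPosPart : Measurable negLogPosPart :=
  Measurable.ite (measurableSet_singleton 0) measurable_const
    Real.measurable_log.neg.ennreal_ofReal

@[fun_prop]
lemma measurable_negLogNegPart : Measurable negLogNegPart :=
  Real.measurable_log.ennreal_ofReal

lemma negLogNegPart_le {a b : ℝ} (ha : 0 ≤ a) (hb : 0 < b) :
    negLogNegPart a ≤ negLogNegPart b + ENNReal.ofReal (a / b) := by
  rcases ha.eq_or_lt with rfl | ha
  · simp [negLogNegPart]
  have := Real.log_le_sub_one_of_pos (div_pos ha hb)
  rw [Real.log_div ha.ne' hb.ne'] at this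
  exact (ENNReal.ofReal_le_ofReal (by linarith)).trans ENNReal.ofReal_add_le

/-- Pointwise form of `log a - log b ≤ a / b - 1`, split into positive and negative parts. -/
lemma negLogPosPart_add_negLogNegPart_add_one_le {a b : ℝ} (ha : 0 ≤ a) (hb : 0 < b) :
    negLogPosPart b + negLogNegPart a + 1
      ≤ negLogPosPart a + negLogNegPart b + ENNReal.ofReal (a / b) := by
  rcases ha.eq_or_lt with rfl | ha
  · simp [negLogPosPart]
  have := Real.log_le_sub_one_of_pos (div_pos ha hb)
  rw [Real.log_div ha.ne' hb.ne'] at this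
  have key : Real.log a - Real.log b + 1 ≤ a / b := by linarith
  simpa [negLogPosPart, negLogNegPart, ha.ne', hb.ne'] using
    ENNReal.ofReal_neg_add_ofReal_add_le zero_le_one key

lemma negLogIntegral_zero_measure (f : X → ℝ) : negLogIntegral (0 : Measure X) f = 0 := by
  simp [negLogIntegral]

lemma negLogIntegral_add_measure (μ ν : Measure X) (f : X → ℝ) :
    negLogIntegral (μ + ν) f = negLogIntegral μ f + negLogIntegral ν f := by
  simp only [negLogIntegral_eq, lintegral_add_measure, EReal.coe_ennreal_add]
  exact EReal.add_sub_add_comm (.inl (EReal.coe_ennreal_ne_bot _))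
    (.inr (EReal.coe_ennreal_ne_bot _))

lemma negLogIntegral_finsetSum_measure {ι : Type*} (s : Finset ι) (μ : ι → Measure X)
    (f : X → ℝ) : negLogIntegral (∑ i ∈ s, μ i) f = ∑ i ∈ s, negLogIntegral (μ i) f := by
  induction s using Finset.induction_on with
  | empty => simp [negLogIntegral_zero_measure]
  | insert i s hi ih =>
    rw [Finset.sum_insert hi, Finset.sum_insert hi, negLogIntegral_add_measure, ih]

lemma negLogIntegral_ofReal_smul_measure {c : ℝ} (hc : 0 ≤ c) (μ : Measure X) (f : X → ℝ) :
    negLogIntegral (ENNReal.ofReal c • μ) f = c * negLogIntegral μ f := by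
  simp only [negLogIntegral_eq, lintegral_smul_measure, smul_eq_mul, EReal.coe_ennreal_mul,
    EReal.coe_ennreal_ofReal, max_eq_left hc]
  exact (EReal.mul_sub_of_nonneg_of_ne_top (EReal.coe_nonneg.2 hc) (EReal.coe_ne_top c)).symm

end NegLogIntegral

/-- Gibbs' inequality. -/
theorem negLogIntegral_density_le {X : Type*} [MeasurableSpace X] {ν μ : Measure X}
    [IsProbabilityMeasure μ] {m f : X → ℝ} (hm : Measurable m)
    (hμ : μ = ν.withDensity fun x => ENNReal.ofReal (m x))
    (hf : Measurable f) (hf0 : ∀ x, 0 ≤ f x) (hf1 : ∫⁻ x, ENNReal.ofReal (f x) ∂ν ≤ 1) :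
    negLogIntegral μ m ≤ negLogIntegral μ f := by
  have hm_pos : ∀ᵐ x ∂μ, 0 < m x := by
    rw [hμ]
    exact (ae_withDensity_iff hm.ennreal_ofReal).2 <|
      ae_of_all _ fun x hx => ENNReal.ofReal_pos.1 (pos_iff_ne_zero.2 hx)
  have hratio : ∫⁻ x, ENNReal.ofReal (f x / m x) ∂μ ≤ 1 :=
    hμ ▸ (lintegral_ofReal_div_le ν hm f).trans hf1
  have hcross : ∫⁻ x, negLogPosPart (m x) ∂μ + ∫⁻ x, negLogNegPart (f x) ∂μ + 1
      ≤ ∫⁻ x, negLogPosPart (f x) ∂μ + ∫⁻ x, negLogNegPart (m x) ∂μ + 1 := by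
    calc _ = ∫⁻ x, (negLogPosPart (m x) + negLogNegPart (f x) + 1) ∂μ := by
          rw [lintegral_add_right _ measurable_const, lintegral_add_left (by fun_prop)]
          simp
      _ ≤ ∫⁻ x, (negLogPosPart (f x) + negLogNegPart (m x) + ENNReal.ofReal (f x / m x)) ∂μ :=
          lintegral_mono_ae <| hm_pos.mono fun x hx =>
            negLogPosPart_add_negLogNegPart_add_one_le (hf0 x) hx
      _ ≤ _ := by
          rw [lintegral_add_left (by fun_prop), lintegral_add_left (by fun_prop)]
          gcongr
  have hneg : ∫⁻ x, negLogNegPart (f x) ∂μ ≤ ∫⁻ x, negLogNegPart (m x) ∂μ + 1 :=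
    calc _ ≤ ∫⁻ x, (negLogNegPart (m x) + ENNReal.ofReal (f x / m x)) ∂μ :=
          lintegral_mono_ae <| hm_pos.mono fun x hx => negLogNegPart_le (hf0 x) hx
      _ ≤ _ := by
          rw [lintegral_add_left (by fun_prop)]
          gcongr
  refine EReal.coe_ennreal_sub_le_sub (fun h => ?_)
    ((ENNReal.add_le_add_iff_right ENNReal.one_ne_top).1 hcross)
  exact ne_top_of_le_ne_top (ENNReal.add_ne_top.2 ⟨h, ENNReal.one_ne_top⟩) hneg

theorem mixture_density_minimizes_weighted_cross_entropy_general
    {X : Type*} [MeasurableSpace X] (ν : Measure X)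
    {P : Type*} [Fintype P]
    (μ : P → Measure X) (hProb : ∀ p, IsProbabilityMeasure (μ p))
    (g : P → X → ℝ) (hgMeas : ∀ p, Measurable (g p)) (hgNonneg : ∀ p x, 0 ≤ g p x)
    (hDens : ∀ p, μ p = ν.withDensity (fun x => ENNReal.ofReal (g p x)))
    (lam : P → ℝ) (hNonneg : ∀ p, 0 ≤ lam p) (hSum : (∑ p, lam p) = 1)
    (f : X → ℝ) (hfMeas : Measurable f) (hfNonneg : ∀ x, 0 ≤ f x)
    (hfDens : ∫⁻ x, ENNReal.ofReal (f x) ∂ν = 1) :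
    ∑ p, (lam p : EReal) * negLogIntegral (μ p) (fun x => ∑ q, lam q * g q x)
      ≤ ∑ p, (lam p : EReal) * negLogIntegral (μ p) f := by
  set mix := ∑ p, ENNReal.ofReal (lam p) • μ p
  have hweighted (h : X → ℝ) :
      ∑ p, (lam p : EReal) * negLogIntegral (μ p) h = negLogIntegral mix h := by
    simp only [mix, negLogIntegral_finsetSum_measure,
      negLogIntegral_ofReal_smul_measure (hNonneg _)]
  have hmix : mix = ν.withDensity fun x => ENNReal.ofReal (∑ q, lam q * g q x) := by
    simp only [mix, hDens]
    rw [finsetSum_smul_withDensity ν _ _ fun q _ => (hgMeas q).ennreal_ofReal]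
    congr 1 with x
    rw [Finset.sum_apply, ENNReal.ofReal_sum_of_nonneg fun q _ =>
      mul_nonneg (hNonneg q) (hgNonneg q x)]
    simp only [Pi.smul_apply, smul_eq_mul, ENNReal.ofReal_mul (hNonneg _)]
  have : IsProbabilityMeasure mix := isProbabilityMeasure_finsetSum_smul Finset.univ hProb
    (by rw [← ENNReal.ofReal_sum_of_nonneg fun p _ => hNonneg p, hSum, ENNReal.ofReal_one])
  rw [hweighted, hweighted]
  exact negLogIntegral_density_le (Finset.measurable_sum _ fun q _ => (hgMeas q).const_mul _) hmix
    hfMeas hfNonneg hfDens.le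

/-- Let `ν` be σ-finite on `X` and let each source `μ p` be a probability
measure with density `g p ≥ 0` w.r.t. `ν`. Fix `λ` in the simplex `Δ^P`. Then for every
measurable probability density `f ≥ 0` (`∫ f dν = 1`), the `λ`-weighted unconditional
cross-entropy of `f` is at least that of the mixture density `x ↦ Σ_q λ_q g_q(x)`:
`Σ_p λ_p ∫ (−log f) dμ_p ≥ Σ_p λ_p ∫ (−log Σ_q λ_q g_q) dμ_p`, in the extended reals. -/
theorem mixture_density_minimizes_weighted_cross_entropy
    {X : Type*} [MeasurableSpace X] (ν : Measure X) [SigmaFinite ν]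
    {P : Type*} [Fintype P] [Nonempty P]
    (μ : P → Measure X) (hProb : ∀ p, IsProbabilityMeasure (μ p))
    (g : P → X → ℝ) (hgMeas : ∀ p, Measurable (g p)) (hgNonneg : ∀ p x, 0 ≤ g p x)
    (hDens : ∀ p, μ p = ν.withDensity (fun x => ENNReal.ofReal (g p x)))
    (lam : P → ℝ) (hNonneg : ∀ p, 0 ≤ lam p) (hSum : (∑ p, lam p) = 1)
    (f : X → ℝ) (hfMeas : Measurable f) (hfNonneg : ∀ x, 0 ≤ f x)
    (hfDens : ∫⁻ x, ENNReal.ofReal (f x) ∂ν = 1) :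
    ∑ p, (lam p : EReal) * negLogIntegral (μ p) (fun x => ∑ q, lam q * g q x)
      ≤ ∑ p, (lam p : EReal) * negLogIntegral (μ p) f :=
  mixture_density_minimizes_weighted_cross_entropy_general ν μ hProb g hgMeas hgNonneg hDens lam
    hNonneg hSum f hfMeas hfNonneg hfDens
end
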